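/- arXiv:2209.14267 — 2 statements merged into one kernel-verified Lean document; each statement's English description precedes it below -/
import Mathlib

section
/- If a sparse vector z satisfies ‖z‖₀ < (1/2)(1 + 1/μ(D)) where μ(D) is the mutual coherence of a dictionary D with nonzero columns, then z is the unique sparsest solution of the system y = Dz, i.e., any z' with Dz' = Dz and z' ≠ z satisfies ‖z'‖₀ > ‖z‖₀. -/
/-!
A nonzero `x` with `D x = 0` has large support `S`: the Gram matrix of the normalized columns of
`D`, restricted to `S`, has unit diagonal, off-diagonal entries bounded by `μ`, and a nonzero
kernel vector, so it cannot be strictly diagonally dominant and `1 ≤ μ (|S| - 1)` (the spark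
bound). Applied to `x = z' - z`, whose support has at most `‖z‖₀ + ‖z'‖₀` elements, this gives
`2 ‖z‖₀ < 1 + 1/μ ≤ ‖z‖₀ + ‖z'‖₀`.
-/

open Finset Matrix

theorem Matrix.one_le_mul_card_sub_one_of_mulVec_eq_zero {n : Type*} [Fintype n]
    {A : Matrix n n ℝ} {μ : ℝ} (hdiag : ∀ i, A i i = 1) (hoff : ∀ i j, i ≠ j → |A i j| ≤ μ)
    {v : n → ℝ} (hv : v ≠ 0) (hAv : A *ᵥ v = 0) : 1 ≤ μ * (Fintype.card n - 1) := by
  classical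
  by_contra! h
  refine hv (eq_zero_of_mulVec_eq_zero (det_ne_zero_of_sum_row_lt_diag fun k => ?_) hAv)
  calc ∑ j ∈ univ.erase k, ‖A k j‖ ≤ ∑ j ∈ univ.erase k, μ :=
        sum_le_sum fun j hj => hoff k j (ne_of_mem_erase hj).symm
    _ = μ * (Fintype.card n - 1) := by
        rw [sum_const, card_erase_of_mem (mem_univ k), card_univ, nsmul_eq_mul,
          Nat.cast_pred (Fintype.card_pos_iff.mpr ⟨k⟩), mul_comm]
    _ < ‖A k k‖ := by rwa [hdiag, norm_one]

section Coherence

variable {ι κ : Type*} [Fintype ι]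

noncomputable def colNorm (D : Matrix ι κ ℝ) (j : κ) : ℝ := √(∑ k, D k j ^ 2)

noncomputable def mutualCoherence (D : Matrix ι κ ℝ) : ℝ :=
  ⨆ p : {p : κ × κ // p.1 ≠ p.2},
    |∑ k, D k p.1.1 * D k p.1.2| / (colNorm D p.1.1 * colNorm D p.1.2)

variable {D : Matrix ι κ ℝ}

theorem colNorm_nonneg (D : Matrix ι κ ℝ) (j : κ) : 0 ≤ colNorm D j := Real.sqrt_nonneg _

theorem colNorm_pos {j : κ} (hj : (fun i => D i j) ≠ 0) : 0 < colNorm D j := by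
  obtain ⟨k, hk⟩ := Function.ne_iff.mp hj
  exact Real.sqrt_pos.mpr <|
    sum_pos' (fun _ _ => sq_nonneg _) ⟨k, mem_univ k, sq_pos_of_ne_zero hk⟩

theorem colNorm_mul_self (j : κ) : colNorm D j * colNorm D j = ∑ k, D k j * D k j := by
  rw [colNorm, Real.mul_self_sqrt (sum_nonneg fun k _ => sq_nonneg _)]
  simp only [sq]

theorem abs_sum_mul_le_colNorm_mul (i j : κ) :
    |∑ k, D k i * D k j| ≤ colNorm D i * colNorm D j :=
  (abs_sum_le_sum_abs _ _).trans <| by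
    simpa only [colNorm, abs_mul, sq_abs] using
      Real.sum_mul_le_sqrt_mul_sqrt univ (|D · i|) (|D · j|)

theorem mutualCoherence_nonneg : 0 ≤ mutualCoherence D :=
  Real.iSup_nonneg fun _ =>
    div_nonneg (abs_nonneg _) (mul_nonneg (colNorm_nonneg D _) (colNorm_nonneg D _))

theorem abs_sum_mul_le_mutualCoherence_mul {i j : κ} (hij : i ≠ j) :
    |∑ k, D k i * D k j| ≤ mutualCoherence D * (colNorm D i * colNorm D j) := by
  have hbdd : BddAbove (Set.range fun p : {p : κ × κ // p.1 ≠ p.2} =>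
      |∑ k, D k p.1.1 * D k p.1.2| / (colNorm D p.1.1 * colNorm D p.1.2)) :=
    ⟨1, Set.forall_mem_range.mpr fun p => div_le_one_of_le₀ (abs_sum_mul_le_colNorm_mul _ _)
      (mul_nonneg (colNorm_nonneg D _) (colNorm_nonneg D _))⟩
  rcases (mul_nonneg (colNorm_nonneg D i) (colNorm_nonneg D j)).eq_or_lt with h0 | hpos
  · simpa [← h0] using abs_sum_mul_le_colNorm_mul (D := D) i j
  · exact (div_le_iff₀ hpos).mp (le_ciSup hbdd ⟨(i, j), hij⟩)

/-- The Gram matrix of the normalized columns has unit diagonal and kills `j ↦ ‖dⱼ‖ xⱼ`. -/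
theorem one_le_coherence_mul_card_sub_one [Fintype κ] {μ : ℝ}
    (hcols : ∀ j, (fun i => D i j) ≠ 0)
    (hμ : ∀ i j, i ≠ j → |∑ k, D k i * D k j| ≤ μ * (colNorm D i * colNorm D j))
    {x : κ → ℝ} (hx : x ≠ 0) (hDx : D *ᵥ x = 0) : 1 ≤ μ * (Fintype.card κ - 1) := by
  set n := colNorm D
  have hn : ∀ j, 0 < n j := fun j => colNorm_pos (hcols j)
  have hGx : ∀ i, ∑ j, (∑ k, D k i * D k j) * x j = 0 := fun i => by
    simpa [mulVec, dotProduct, mul_apply] using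
      congrFun (by rw [← mulVec_mulVec, hDx, mulVec_zero] : (Dᵀ * D) *ᵥ x = 0) i
  refine one_le_mul_card_sub_one_of_mulVec_eq_zero
    (A := fun i j => (∑ k, D k i * D k j) / (n i * n j)) (v := fun j => n j * x j)
    (fun i => ?_) (fun i j hij => ?_) ?_ ?_
  · rw [← colNorm_mul_self]
    exact div_self (mul_pos (hn i) (hn i)).ne'
  · rw [abs_div, abs_of_pos (mul_pos (hn i) (hn j))]
    exact (div_le_iff₀ (mul_pos (hn i) (hn j))).mpr (hμ i j hij)
  · obtain ⟨j, hj⟩ := Function.ne_iff.mp hx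
    exact Function.ne_iff.mpr ⟨j, mul_ne_zero (hn j).ne' hj⟩
  · ext i
    calc ∑ j, (∑ k, D k i * D k j) / (n i * n j) * (n j * x j)
        = (∑ j, (∑ k, D k i * D k j) * x j) / n i := by
          rw [sum_div]
          refine sum_congr rfl fun j _ => ?_
          field_simp [(hn i).ne', (hn j).ne']
      _ = 0 := by rw [hGx, zero_div]

theorem one_le_mutualCoherence_mul_card_support_sub_one [Fintype κ]
    (hcols : ∀ j, (fun i => D i j) ≠ 0) {x : κ → ℝ} (hx : x ≠ 0) (hDx : D *ᵥ x = 0) :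
    1 ≤ mutualCoherence D * (#{j | x j ≠ 0} - 1) := by
  set S : Finset κ := {j | x j ≠ 0}
  have hsum : ∀ f : κ → ℝ, ∑ j : S, f j * x j = ∑ j, f j * x j := fun f => by
    rw [sum_coe_sort S (fun j => f j * x j)]
    exact sum_filter_of_ne fun j _ hj => right_ne_zero_of_mul hj
  rw [← Fintype.card_coe S]
  refine one_le_coherence_mul_card_sub_one (D := D.submatrix id ((↑) : S → κ))
    (x := fun j => x j) (fun j => hcols j)
    (fun i j hij => abs_sum_mul_le_mutualCoherence_mul (Subtype.coe_ne_coe.mpr hij)) ?_ ?_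
  · obtain ⟨j, hj⟩ := Function.ne_iff.mp hx
    exact Function.ne_iff.mpr ⟨⟨j, mem_filter.mpr ⟨mem_univ j, hj⟩⟩, hj⟩
  · ext i
    simpa only [mulVec, dotProduct, submatrix_apply, id, hsum] using congrFun hDx i

end Coherence

theorem card_support_sub_le {κ : Type*} [Fintype κ] [DecidableEq κ] (x y : κ → ℝ) :
    #{j | (x - y) j ≠ 0} ≤ #{j | x j ≠ 0} + #{j | y j ≠ 0} :=
  (card_le_card fun j => by
    simp only [mem_filter, mem_union, mem_univ, true_and, Pi.sub_apply]
    grind).trans (card_union_le _ _)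

/-- Classical uniqueness of sparse representations: if `‖z‖₀ < (1/2)(1 + 1/μ(D))` where
`μ(D)` is the mutual coherence of a dictionary with nonzero columns, then `z` is the unique
sparsest solution of `y = Dz`: any `z' ≠ z` with `Dz' = Dz` satisfies `‖z'‖₀ > ‖z‖₀`. -/
theorem sparse_representation_unique {N M : ℕ} (D : Matrix (Fin N) (Fin M) ℝ)
    (hcols : ∀ j, (fun i => D i j) ≠ 0)
    (μ : ℝ)
    (hμ : μ = ⨆ p : {p : Fin M × Fin M // p.1 ≠ p.2},
      |∑ k, D k p.1.1 * D k p.1.2| /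
        (Real.sqrt (∑ k, (D k p.1.1) ^ 2) * Real.sqrt (∑ k, (D k p.1.2) ^ 2)))
    (z : Fin M → ℝ)
    (hsparse : ((Finset.univ.filter (fun j => z j ≠ 0)).card : ℝ) <
      (1 / 2) * (1 + 1 / μ)) :
    ∀ z' : Fin M → ℝ, D.mulVec z' = D.mulVec z → z' ≠ z →
      ((Finset.univ.filter (fun j => z j ≠ 0)).card : ℝ) <
        ((Finset.univ.filter (fun j => z' j ≠ 0)).card : ℝ) := by
  intro z' hDz hne
  replace hμ : μ = mutualCoherence D := hμ
  have hspark := one_le_mutualCoherence_mul_card_support_sub_one hcols (sub_ne_zero.mpr hne)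
    (by rw [mulVec_sub, hDz, sub_self])
  rw [← hμ] at hspark
  have hcard : (#{j | (z' - z) j ≠ 0} : ℝ) ≤ #{j | z' j ≠ 0} + #{j | z j ≠ 0} := by
    exact_mod_cast card_support_sub_le z' z
  have hμpos : 0 < μ :=
    (hμ ▸ mutualCoherence_nonneg).lt_of_ne (by rintro rfl; norm_num at hspark)
  have hinv : 1 / μ ≤ #{j | (z' - z) j ≠ 0} - 1 := by
    rw [div_le_iff₀ hμpos]
    linarith
  linarith
end

section
/- For any matrix D with ℓ₂-normalized nonzero columns, the spark of D satisfies spark(D) ≥ 1 + 1/μ(D), where μ(D) is the mutual coherence. -/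
/-!
The Gram matrix `Dᵀ D` has unit diagonal and off-diagonal entries bounded by `μ`. A nonzero
`v` with `D v = 0` makes the principal submatrix of `Dᵀ D` on the support `S` of `v` singular,
so by Gershgorin some row of it fails to be strictly diagonally dominant:
`1 ≤ ∑_{j ≠ k} |(Dᵀ D)ₖⱼ| ≤ (|S| - 1) μ`.
-/

open scoped Matrix

namespace Matrix

theorem det_submatrix_eq_zero_of_mulVec_eq_zero {n A : Type*} [Fintype n] [DecidableEq n]
    [CommRing A] [IsDomain A] {M : Matrix n n A} {v : n → A} {s : Finset n}
    (hv : v ≠ 0) (hvs : ∀ j ∉ s, v j = 0) (hMv : M *ᵥ v = 0) :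
    (M.submatrix ((↑) : s → n) (↑)).det = 0 := by
  rw [← exists_mulVec_eq_zero_iff]
  obtain ⟨j, hj⟩ := Function.ne_iff.mp hv
  have hjs : j ∈ s := by
    by_contra h
    exact hj (hvs j h)
  refine ⟨fun i => v i, fun h => hj (congrFun h ⟨j, hjs⟩), ?_⟩
  ext i
  have hsum : ∑ k ∈ s, M i k * v k = ∑ k, M i k * v k :=
    Finset.sum_subset (Finset.subset_univ s) fun k _ hk => by rw [hvs k hk, mul_zero]
  simp only [mulVec, dotProduct, submatrix_apply, Pi.zero_apply]
  rw [Finset.sum_coe_sort s fun k => M i k * v k, hsum]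
  exact congrFun hMv i

theorem one_add_one_div_le_card_of_det_eq_zero {K ι : Type*} [NormedField K] [Fintype ι]
    [DecidableEq ι] {B : Matrix ι ι K} {μ : ℝ} (hdiag : ∀ k, ‖B k k‖ = 1)
    (hoff : ∀ j k, j ≠ k → ‖B j k‖ ≤ μ) (hdet : B.det = 0) :
    1 + 1 / μ ≤ Fintype.card ι := by
  obtain ⟨k, hk⟩ : ∃ k, 1 ≤ ∑ j ∈ Finset.univ.erase k, ‖B k j‖ := by
    by_contra! h
    exact det_ne_zero_of_sum_row_lt_diag (fun k => (hdiag k).symm ▸ h k) hdet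
  have hcard : (1 : ℝ) ≤ Fintype.card ι := mod_cast Fintype.card_pos_iff.mpr ⟨k⟩
  have hrow : ∑ j ∈ Finset.univ.erase k, ‖B k j‖ ≤ (Fintype.card ι - 1) * μ :=
    calc ∑ j ∈ Finset.univ.erase k, ‖B k j‖
        ≤ ∑ _j ∈ Finset.univ.erase k, μ :=
          Finset.sum_le_sum fun j hj => hoff k j (Finset.ne_of_mem_erase hj).symm
      _ = (Fintype.card ι - 1) * μ := by
          rw [Finset.sum_const, Finset.card_erase_of_mem (Finset.mem_univ k), nsmul_eq_mul,
            Finset.card_univ, Nat.cast_pred (Fintype.card_pos_iff.mpr ⟨k⟩)]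
  have hμ : 0 < μ := by nlinarith
  have hinv : 1 / μ ≤ Fintype.card ι - 1 := by
    rw [div_le_iff₀ hμ]
    linarith
  linarith

end Matrix

/-- Spark bound via mutual coherence: for a matrix with ℓ₂-normalized columns,
`spark(D) ≥ 1 + 1/μ(D)`, i.e. every nonzero vector in the kernel of `D` has at least
`1 + 1/μ(D)` nonzero entries. -/
theorem spark_ge_one_add_inv_coherence {N M : ℕ} (D : Matrix (Fin N) (Fin M) ℝ)
    (hnorm : ∀ j, ∑ i, (D i j) ^ 2 = 1)
    (μ : ℝ)
    (hμ : μ = ⨆ p : {p : Fin M × Fin M // p.1 ≠ p.2},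
      |∑ k, D k p.1.1 * D k p.1.2|) :
    ∀ v : Fin M → ℝ, v ≠ 0 → D.mulVec v = 0 →
      1 + 1 / μ ≤ ((Finset.univ.filter (fun j => v j ≠ 0)).card : ℝ) := by
  intro v hv hDv
  set S := Finset.univ.filter (fun j => v j ≠ 0)
  have hGram : (Dᵀ * D) *ᵥ v = 0 := by
    rw [← Matrix.mulVec_mulVec, hDv, Matrix.mulVec_zero]
  have hdet := Matrix.det_submatrix_eq_zero_of_mulVec_eq_zero (s := S) hv
    (fun j hj => by simpa [S] using hj) hGram
  have hdiag : ∀ k : S, ‖(Dᵀ * D) k k‖ = 1 := fun k => by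
    simp [Matrix.mul_apply, ← sq, hnorm]
  have hoff : ∀ j k : S, j ≠ k → ‖(Dᵀ * D) j k‖ ≤ μ := fun j k hjk => by
    let coherence := fun p : {p : Fin M × Fin M // p.1 ≠ p.2} => |∑ i, D i p.1.1 * D i p.1.2|
    rw [hμ]
    simpa [Matrix.mul_apply] using le_ciSup (Set.finite_range coherence).bddAbove
      ⟨((j : Fin M), (k : Fin M)), Subtype.coe_injective.ne hjk⟩
  simpa using Matrix.one_add_one_div_le_card_of_det_eq_zero hdiag hoff hdet
end
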